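/- arXiv:2603.02442 — 3 statements merged into one kernel-verified Lean document; each statement's English description precedes it below -/
import Mathlib

section
/- Let X be a Banach space and T a bounded linear operator on X. If T has no irregular vector (i.e., no x with liminf ||T^n x|| = 0 and limsup ||T^n x|| = ∞), then every vector x whose orbit (T^n x) has a subsequence converging to 0 satisfies T^n x → 0. -/
/-!
Let `Y` be the closed linear span of the orbit of `x`. If the powers of `T` are pointwise bounded
on `Y`, Banach–Steinhaus makes them uniformly bounded there, and `‖Tⁿ x‖ ≤ C ‖T^(φ k) x‖` for
`n ≥ φ k` forces `Tⁿ x → 0`. Otherwise, in the Baire space `Y`, the vectors with unbounded orbit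
form a residual set, because the vectors with bounded orbit form a proper subspace, which has empty
interior. So do the vectors whose orbit comes arbitrarily close to `0`: they form a `Gδ` set
containing the dense span of the orbit, on which `T^(φ k)` tends to `0`. A vector in both sets
is irregular.
-/

open Filter Topology Set

theorem liminf_eq_zero_of_frequently_lt {u : ℕ → ℝ} (hu : ∀ n, 0 ≤ u n)
    (h : ∀ ε > 0, ∃ᶠ n in atTop, u n < ε) : liminf u atTop = 0 := by
  have hbdd : IsBoundedUnder (· ≥ ·) atTop u := isBoundedUnder_of ⟨0, hu⟩
  have hcobdd : IsCoboundedUnder (· ≥ ·) atTop u :=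
    IsCoboundedUnder.of_frequently_le ((h 1 one_pos).mono fun _ => le_of_lt)
  refine le_antisymm (le_of_forall_pos_le_add fun ε hε => ?_)
    (le_liminf_of_le hcobdd (Eventually.of_forall hu))
  rw [zero_add]
  exact liminf_le_of_frequently_le ((h ε hε).mono fun _ => le_of_lt) hbdd

theorem eventually_residual_frequently_lt {X : Type*} [TopologicalSpace X] {f : ℕ → X → ℝ}
    (hf : ∀ n, Continuous (f n)) (hd : Dense {x | ∀ ε > 0, ∃ᶠ n in atTop, f n x < ε}) :
    ∀ᶠ x in residual X, ∀ ε > 0, ∃ᶠ n in atTop, f n x < ε := by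
  have hopen : ∀ k N : ℕ, IsOpen {x | ∃ n ≥ N, f n x < 1 / (k + 1)} := fun k N => by
    simp only [ofPred_exists, ofPred_and]
    exact isOpen_iUnion fun n => isOpen_const.inter (isOpen_lt (hf n) continuous_const)
  have hdense : ∀ k N : ℕ, Dense {x | ∃ n ≥ N, f n x < 1 / (k + 1)} := by
    refine fun k N => hd.mono fun x hx => ?_
    exact frequently_atTop.1 (hx _ Nat.one_div_pos_of_nat) N
  have hres : ∀ᶠ x in residual X, ∀ k N : ℕ, ∃ n ≥ N, f n x < 1 / (k + 1) :=
    eventually_countable_forall.2 fun k => eventually_countable_forall.2 fun N =>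
      residual_of_dense_open (hopen k N) (hdense k N)
  filter_upwards [hres] with x hx ε hε
  obtain ⟨k, hk⟩ := exists_nat_one_div_lt hε
  exact frequently_atTop.2 fun N => (hx k N).imp fun n hn => ⟨hn.1, hn.2.trans hk⟩

theorem Submodule.dense_preimage_coe_topologicalClosure {R M : Type*} [Semiring R]
    [AddCommMonoid M] [Module R M] [TopologicalSpace M] [ContinuousAdd M] [ContinuousConstSMul R M]
    (S : Submodule R M) : Dense ((↑) ⁻¹' (S : Set M) : Set S.topologicalClosure) := by
  refine Subtype.dense_iff.2 (S.topologicalClosure_coe.subset.trans (closure_mono ?_))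
  exact fun s hs => ⟨⟨s, S.le_topologicalClosure hs⟩, hs, rfl⟩

namespace ContinuousLinearMap

variable {𝕜 E F ι : Type*} [NontriviallyNormedField 𝕜] [NormedAddCommGroup E] [NormedSpace 𝕜 E]
  [NormedAddCommGroup F] [NormedSpace 𝕜 F]

def pointwiseBddSubmodule (g : ι → E →L[𝕜] F) : Submodule 𝕜 E where
  carrier := {y | BddAbove (range fun i => ‖g i y‖)}
  zero_mem' := ⟨0, forall_mem_range.2 fun i => by simp⟩
  add_mem' := by
    rintro y z ⟨a, ha⟩ ⟨b, hb⟩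
    refine ⟨a + b, forall_mem_range.2 fun i => ?_⟩
    rw [map_add]
    exact (norm_add_le _ _).trans (add_le_add (ha ⟨i, rfl⟩) (hb ⟨i, rfl⟩))
  smul_mem' := by
    rintro c y ⟨a, ha⟩
    refine ⟨‖c‖ * a, forall_mem_range.2 fun i => ?_⟩
    rw [map_smul, norm_smul]
    exact mul_le_mul_of_nonneg_left (ha ⟨i, rfl⟩) (norm_nonneg c)

def tendstoZeroSubmodule (g : ι → E →L[𝕜] F) (l : Filter ι) : Submodule 𝕜 E where
  carrier := {y | Tendsto (fun i => g i y) l (𝓝 0)}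
  zero_mem' := by simpa using tendsto_const_nhds
  add_mem' := fun hy hz => by simpa using hy.add hz
  smul_mem' := fun c y hy => by simpa using hy.const_smul c

theorem eventually_residual_not_bddAbove {g : ι → E →L[𝕜] F}
    (h : ∃ y, ¬BddAbove (range fun i => ‖g i y‖)) :
    ∀ᶠ y in residual E, ¬BddAbove (range fun i => ‖g i y‖) := by
  have hint : interior (pointwiseBddSubmodule g : Set E) = ∅ := by
    refine not_nonempty_iff_eq_empty.1 fun hne => ?_
    obtain ⟨y, hy⟩ := h
    change y ∉ pointwiseBddSubmodule g at hy
    rw [(pointwiseBddSubmodule g).eq_top_of_nonempty_interior' hne] at hy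
    exact hy Submodule.mem_top
  have hres : ∀ᶠ y in residual E, ∀ q : ℕ, ∃ i, (q : ℝ) < ‖g i y‖ := by
    refine eventually_countable_forall.2 fun q => residual_of_dense_open ?_ ?_
    · simp only [ofPred_exists]
      exact isOpen_iUnion fun i => isOpen_lt continuous_const (g i).continuous.norm
    · refine (interior_eq_empty_iff_dense_compl.1 hint).mono fun y hy => ?_
      by_contra hq
      simp only [mem_ofPred_eq, not_exists, not_lt] at hq
      exact hy ⟨q, forall_mem_range.2 hq⟩
  filter_upwards [hres] with y hy ⟨C, hC⟩
  obtain ⟨q, hq⟩ := exists_nat_ge C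
  obtain ⟨i, hi⟩ := hy q
  exact (hC ⟨i, rfl⟩).not_gt (hq.trans_lt hi)

theorem exists_liminf_eq_zero_not_bddAbove [CompleteSpace E] {g : ℕ → E →L[𝕜] F}
    (hd : Dense {y | ∀ ε > 0, ∃ᶠ n in atTop, ‖g n y‖ < ε})
    (h : ∃ y, ¬BddAbove (range fun n => ‖g n y‖)) :
    ∃ y, liminf (fun n => ‖g n y‖) atTop = 0 ∧ ¬BddAbove (range fun n => ‖g n y‖) := by
  have hres := (eventually_residual_frequently_lt (fun n => (g n).continuous.norm) hd).and
    (eventually_residual_not_bddAbove h)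
  obtain ⟨y, hsmall, hunbdd⟩ := (dense_of_mem_residual hres).nonempty
  exact ⟨y, liminf_eq_zero_of_frequently_lt (fun n => norm_nonneg _) hsmall, hunbdd⟩

theorem exists_norm_apply_le_of_bddAbove [CompleteSpace E] {g : ι → E →L[𝕜] F}
    (h : ∀ y, BddAbove (range fun i => ‖g i y‖)) : ∃ C, ∀ i y, ‖g i y‖ ≤ C * ‖y‖ := by
  obtain ⟨C, hC⟩ := banach_steinhaus fun y => (h y).imp fun _ hC i => hC ⟨i, rfl⟩
  exact ⟨C, fun i y => (g i).le_of_opNorm_le (hC i) y⟩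

theorem tendsto_pow_apply_zero_of_norm_le {T : E →L[𝕜] E} {x : E} {C : ℝ}
    (hC : ∀ m n, ‖(T ^ n) ((T ^ m) x)‖ ≤ C * ‖(T ^ m) x‖) {l : Filter ι} [l.NeBot] {φ : ι → ℕ}
    (h : Tendsto (fun i => (T ^ φ i) x) l (𝓝 0)) : Tendsto (fun n => (T ^ n) x) atTop (𝓝 0) := by
  refine Metric.tendsto_atTop.2 fun ε hε => ?_
  have hsmall : Tendsto (fun i => C * ‖(T ^ φ i) x‖) l (𝓝 0) := by
    simpa using h.norm.const_mul C
  obtain ⟨i, hi⟩ := (hsmall.eventually (gt_mem_nhds hε)).exists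
  refine ⟨φ i, fun n hn => ?_⟩
  rw [dist_zero_right, ← Nat.sub_add_cancel hn, pow_add, mul_apply_eq_comp]
  exact (hC _ _).trans_lt hi

theorem pow_apply_mem_tendstoZeroSubmodule {T : E →L[𝕜] E} {x : E} {l : Filter ι} {φ : ι → ℕ}
    (h : Tendsto (fun i => (T ^ φ i) x) l (𝓝 0)) (m : ℕ) :
    (T ^ m) x ∈ tendstoZeroSubmodule (fun i => T ^ φ i) l := by
  have := ((T ^ m).continuous.tendsto 0).comp h
  rw [map_zero] at this
  exact this.congr fun i => DFunLike.congr_fun (Commute.pow_pow_self T m (φ i)).eq x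

end ContinuousLinearMap

/-- If a bounded operator `T` on a Banach space has no irregular vector
(no `x` with `liminf ‖T^n x‖ = 0` and `limsup ‖T^n x‖ = ∞`), then every
vector whose orbit has a subsequence converging to `0` satisfies `T^n x → 0`. -/
theorem stmt0 {X : Type*} [NormedAddCommGroup X] [NormedSpace ℂ X] [CompleteSpace X]
    (T : X →L[ℂ] X)
    (hno : ¬ ∃ x : X, Filter.liminf (fun n : ℕ => ‖(T ^ n) x‖) atTop = 0 ∧
      ¬ BddAbove (Set.range fun n : ℕ => ‖(T ^ n) x‖)) :
    ∀ x : X, (∃ φ : ℕ → ℕ, StrictMono φ ∧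
        Tendsto (fun k => (T ^ (φ k)) x) atTop (𝓝 0)) →
      Tendsto (fun n => (T ^ n) x) atTop (𝓝 0) := by
  rintro x ⟨φ, hφ, hlim⟩
  set S := Submodule.span ℂ (range fun n => (T ^ n) x)
  set Y := S.topologicalClosure
  have horbit : ∀ m, (T ^ m) x ∈ Y :=
    fun m => S.le_topologicalClosure (Submodule.subset_span ⟨m, rfl⟩)
  let g : ℕ → Y →L[ℂ] X := fun n => (T ^ n).comp Y.subtypeL
  by_cases hbdd : ∀ y, BddAbove (range fun n => ‖g n y‖)
  · obtain ⟨C, hC⟩ := ContinuousLinearMap.exists_norm_apply_le_of_bddAbove hbdd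
    exact ContinuousLinearMap.tendsto_pow_apply_zero_of_norm_le
      (fun m n => hC n ⟨_, horbit m⟩) hlim
  push Not at hbdd
  have hS : S ≤ ContinuousLinearMap.tendstoZeroSubmodule (fun k => T ^ φ k) atTop :=
    Submodule.span_le.2 <| range_subset_iff.2
      (ContinuousLinearMap.pow_apply_mem_tendstoZeroSubmodule hlim)
  have hsmall : Dense {y : Y | ∀ ε > 0, ∃ᶠ n in atTop, ‖g n y‖ < ε} := by
    refine S.dense_preimage_coe_topologicalClosure.mono fun y hyS ε hε => ?_
    have hy : Tendsto (fun k => (T ^ φ k) y) atTop (𝓝 0) := hS hyS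
    have hε' : ‖(0 : X)‖ < ε := by rwa [norm_zero]
    exact hφ.tendsto_atTop.frequently (hy.norm.eventually (gt_mem_nhds hε')).frequently
  obtain ⟨y, hy⟩ := ContinuousLinearMap.exists_liminf_eq_zero_not_bddAbove hsmall hbdd
  exact (hno ⟨y, hy⟩).elim
end

section
/- Let X be a Banach space and T a bounded linear operator on X. If T has no irregular vector, then the set NS(T) = {x ∈ X : some subsequence of (T^n x) converges to 0} is a linear subspace of X. -/
/-!
Let `x ∈ NS(T)` and let `Z` be the closed linear span of its orbit. Along a subsequence
`T^{n_k} → 0` on the orbit, hence on a dense subspace of `Z`, so the vectors of `Z` having `0`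
as a cluster point of their orbit form a dense Gδ subset `G`. Without irregular vectors every
orbit from `G` is bounded, and since `G - G = Z` by Baire's theorem, all orbits in `Z` are
bounded. By Banach–Steinhaus `‖T^n‖` is then bounded on `Z` by some `C`, so
`‖T^n x‖ ≤ C ‖T^{n_k} x‖` for `n ≥ n_k`, and the whole orbit of `x` tends to `0`. Thus `NS(T)` is
the set of vectors whose orbit tends to `0`, which is clearly a subspace.
-/

open Filter Topology Set Metric

section TendstoZeroSubmodule

variable {ι R E F G : Type*} [Semiring R] [AddCommMonoid E] [Module R E]
  [TopologicalSpace F] [AddCommMonoid F] [Module R F] [ContinuousAdd F] [ContinuousConstSMul R F]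
  [FunLike G E F] [LinearMapClass G R E F]

def tendstoZeroSubmodule (g : ι → G) (l : Filter ι) : Submodule R E where
  carrier := {v | Tendsto (fun i => g i v) l (𝓝 0)}
  add_mem' {v w} hv hw := by simpa only [mem_ofPred_eq, map_add, add_zero] using hv.add hw
  zero_mem' := by simpa only [mem_ofPred_eq, map_zero] using tendsto_const_nhds
  smul_mem' c v hv := by simpa only [mem_ofPred_eq, map_smul, smul_zero] using hv.const_smul c

end TendstoZeroSubmodule

theorem isGδ_setOf_mapClusterPt {X Y : Type*} [TopologicalSpace X] [PseudoMetricSpace Y]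
    {f : ℕ → X → Y} (hf : ∀ n, Continuous (f n)) (y : Y) :
    IsGδ {x | MapClusterPt y atTop fun n => f n x} := by
  have h : {x | MapClusterPt y atTop fun n => f n x} =
      ⋂ (j : ℕ) (N : ℕ), ⋃ n ≥ N, f n ⁻¹' ball y (1 / (j + 1)) := by
    ext x
    simp [nhds_basis_ball_inv_nat_succ.mapClusterPt_iff_frequently, frequently_atTop]
  rw [h]
  exact .iInter fun j => .iInter fun N =>
    (isOpen_biUnion fun n _ => isOpen_ball.preimage (hf n)).isGδ

theorem IsGδ.exists_sub_eq {A : Type*} [TopologicalSpace A] [AddCommGroup A]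
    [IsTopologicalAddGroup A] [BaireSpace A] {G : Set A} (hG : IsGδ G) (hd : Dense G) (z : A) :
    ∃ a ∈ G, ∃ b ∈ G, a - b = z := by
  have hshift : Dense ((· - z) ⁻¹' G) := hd.preimage (Homeomorph.subRight z).isOpenMap
  obtain ⟨a, ha, haz⟩ := (hd.inter_of_Gδ hG (hG.preimage (continuous_sub_right z)) hshift).nonempty
  exact ⟨a, ha, a - z, haz, sub_sub_cancel a z⟩

theorem liminf_norm_eq_zero_of_mapClusterPt {ι E : Type*} [SeminormedAddCommGroup E]
    {l : Filter ι} {u : ι → E} (hu : MapClusterPt 0 l u) :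
    liminf (fun i => ‖u i‖) l = 0 := by
  have h : MapClusterPt 0 l fun i => ‖u i‖ := by
    simpa [Function.comp_def] using hu.tendsto_comp (continuous_norm.tendsto 0)
  have hcobdd : IsCoboundedUnder (· ≥ ·) l fun i => ‖u i‖ :=
    .of_frequently_le (h.frequently (Iic_mem_nhds zero_lt_one))
  exact le_antisymm (h.liminf_le (isBoundedUnder_of ⟨0, fun i => norm_nonneg (u i)⟩))
    (le_liminf_of_le hcobdd (.of_forall fun i => norm_nonneg (u i)))

theorem tendsto_zero_of_mapClusterPt_of_norm_le {E : Type*} [SeminormedAddCommGroup E]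
    {u : ℕ → E} {C : ℝ} (hC : ∀ m k, ‖u (k + m)‖ ≤ C * ‖u m‖) (hu : MapClusterPt 0 atTop u) :
    Tendsto u atTop (𝓝 0) := by
  rw [NormedAddGroup.tendsto_nhds_zero]
  intro ε hε
  have hC' : 0 < |C| + 1 := by positivity
  obtain ⟨m, hm⟩ := (hu.frequently (ball_mem_nhds 0 (div_pos hε hC'))).exists
  rw [dist_zero_right] at hm
  filter_upwards [eventually_ge_atTop m] with n hn
  obtain ⟨k, rfl⟩ := Nat.exists_eq_add_of_le' hn
  calc ‖u (k + m)‖ ≤ C * ‖u m‖ := hC m k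
    _ ≤ (|C| + 1) * ‖u m‖ := by gcongr; linarith [le_abs_self C]
    _ < (|C| + 1) * (ε / (|C| + 1)) := by gcongr
    _ = ε := mul_div_cancel₀ ε hC'.ne'

section BanachSpace

variable {𝕜 E F : Type*} [NontriviallyNormedField 𝕜] [NormedAddCommGroup E] [NormedSpace 𝕜 E]
  [CompleteSpace E] [NormedAddCommGroup F] [NormedSpace 𝕜 F]

theorem exists_norm_le_of_dense_mapClusterPt {g : ℕ → E →L[𝕜] F}
    (hdense : Dense {v | MapClusterPt 0 atTop fun n => g n v})
    (hbdd : ∀ v, MapClusterPt 0 atTop (fun n => g n v) → BddAbove (range fun n => ‖g n v‖)) :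
    ∃ C, ∀ n, ‖g n‖ ≤ C := by
  refine banach_steinhaus fun z => ?_
  obtain ⟨a, ha, b, hb, rfl⟩ :=
    (isGδ_setOf_mapClusterPt (fun n => (g n).continuous) 0).exists_sub_eq hdense z
  obtain ⟨Ca, hCa⟩ := hbdd a ha
  obtain ⟨Cb, hCb⟩ := hbdd b hb
  refine ⟨Ca + Cb, fun n => ?_⟩
  calc ‖g n (a - b)‖ ≤ ‖g n a‖ + ‖g n b‖ := by rw [map_sub]; exact norm_sub_le _ _
    _ ≤ Ca + Cb := add_le_add (hCa ⟨n, rfl⟩) (hCb ⟨n, rfl⟩)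

theorem tendsto_pow_apply_of_mapClusterPt {T : E →L[𝕜] E}
    (hT : ∀ x, MapClusterPt 0 atTop (fun n => (T ^ n) x) → BddAbove (range fun n => ‖(T ^ n) x‖))
    {x : E} (hx : MapClusterPt 0 atTop fun n => (T ^ n) x) :
    Tendsto (fun n => (T ^ n) x) atTop (𝓝 0) := by
  obtain ⟨φ, hφ, hφx⟩ := hx.tendsto_subseq
  set V := Submodule.span 𝕜 (range fun m => (T ^ m) x)
  set Z := V.topologicalClosure
  have : CompleteSpace Z := V.isClosed_topologicalClosure.completeSpace_coe
  have hV : V ≤ tendstoZeroSubmodule (fun k => T ^ φ k) atTop := by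
    rw [Submodule.span_le]
    rintro _ ⟨m, rfl⟩
    have h := ((T ^ m).continuous.tendsto 0).comp hφx
    rw [map_zero] at h
    exact h.congr fun k => DFunLike.congr_fun (pow_mul_comm T m (φ k)) x
  have hVZ : Dense ((↑) ⁻¹' (V : Set E) : Set Z) := by
    refine Subtype.dense_iff.2 fun y (hy : y ∈ V.topologicalClosure) => ?_
    rw [← SetLike.mem_coe, Submodule.topologicalClosure_coe] at hy
    refine closure_mono (fun v hv => ?_) hy
    exact ⟨⟨v, V.le_topologicalClosure hv⟩, hv, rfl⟩
  let g : ℕ → Z →L[𝕜] E := fun n => (T ^ n).comp Z.subtypeL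
  obtain ⟨C, hC⟩ := exists_norm_le_of_dense_mapClusterPt (g := g)
    (hVZ.mono fun v hv => ((hV hv).mapClusterPt).of_comp hφ.tendsto_atTop) fun v => hT v
  refine tendsto_zero_of_mapClusterPt_of_norm_le (C := C) (fun m k => ?_) hx
  have hm : (T ^ m) x ∈ Z := V.le_topologicalClosure (Submodule.subset_span ⟨m, rfl⟩)
  calc ‖(T ^ (k + m)) x‖ = ‖g k ⟨_, hm⟩‖ := by simp [g, pow_add]
    _ ≤ ‖g k‖ * ‖(⟨_, hm⟩ : Z)‖ := (g k).le_opNorm _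
    _ ≤ C * ‖(T ^ m) x‖ := mul_le_mul_of_nonneg_right (hC k) (norm_nonneg _)

end BanachSpace

/-- If `T` has no irregular vector, then
`NS(T) = {x : some subsequence of (T^n x) converges to 0}` is a linear subspace. -/
theorem stmt1 {X : Type*} [NormedAddCommGroup X] [NormedSpace ℂ X] [CompleteSpace X]
    (T : X →L[ℂ] X)
    (hno : ¬ ∃ x : X, Filter.liminf (fun n : ℕ => ‖(T ^ n) x‖) atTop = 0 ∧
      ¬ BddAbove (Set.range fun n : ℕ => ‖(T ^ n) x‖)) :
    ∃ S : Submodule ℂ X, (S : Set X) =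
      {x : X | ∃ φ : ℕ → ℕ, StrictMono φ ∧
        Tendsto (fun k => (T ^ (φ k)) x) atTop (𝓝 0)} := by
  have hT : ∀ x, MapClusterPt 0 atTop (fun n => (T ^ n) x) →
      BddAbove (range fun n => ‖(T ^ n) x‖) := fun x hx => by
    by_contra hunbdd
    exact hno ⟨x, liminf_norm_eq_zero_of_mapClusterPt hx, hunbdd⟩
  refine ⟨tendstoZeroSubmodule (fun n => T ^ n) atTop,
    Set.ext fun x => ⟨fun hx => ⟨id, strictMono_id, hx⟩, ?_⟩⟩
  rintro ⟨φ, hφ, hφx⟩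
  exact tendsto_pow_apply_of_mapClusterPt hT (hφx.mapClusterPt.of_comp hφ.tendsto_atTop)
end

section
/- Let X be a Banach space and T a bounded linear operator. If X is the closure of the span of NS(T), NS(T) is residual in X, and T is not power bounded, then T has an irregular vector. -/
/-!
By Banach–Steinhaus and Baire, a family of operators that is not uniformly bounded has
unbounded orbits on a residual set. Since `NS(T)` is also residual, the two residual sets
meet, and a vector in the intersection is irregular: a subsequence of its orbit tends to `0`,
while the whole orbit is unbounded.
-/

open Filter Topology Set

section BanachSteinhaus

variable {E F 𝕜 𝕜₂ : Type*} [SeminormedAddCommGroup E] [SeminormedAddCommGroup F]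
  [NontriviallyNormedField 𝕜] [NontriviallyNormedField 𝕜₂] [NormedSpace 𝕜 E] [NormedSpace 𝕜₂ F]
  {σ₁₂ : 𝕜 →+* 𝕜₂} [RingHomIsometric σ₁₂] {ι : Type*}

def ContinuousLinearMap.pointwiseBoundedSubmodule (g : ι → E →SL[σ₁₂] F) : Submodule 𝕜 E where
  carrier := {x | BddAbove (range fun i => ‖g i x‖)}
  zero_mem' := ⟨0, by simp [mem_upperBounds]⟩
  add_mem' := by
    rintro x y ⟨a, ha⟩ ⟨b, hb⟩
    refine ⟨a + b, forall_mem_range.2 fun i => ?_⟩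
    calc ‖g i (x + y)‖ ≤ ‖g i x‖ + ‖g i y‖ := by rw [map_add]; exact norm_add_le _ _
      _ ≤ a + b := add_le_add (ha (mem_range_self i)) (hb (mem_range_self i))
  smul_mem' := by
    rintro c x ⟨a, ha⟩
    refine ⟨‖c‖ * a, forall_mem_range.2 fun i => ?_⟩
    simp only [map_smulₛₗ, norm_smul, RingHomIsometric.norm_map]
    exact mul_le_mul_of_nonneg_left (ha (mem_range_self i)) (norm_nonneg c)

theorem isMeagre_setOf_bddAbove_norm_apply [CompleteSpace E] {g : ι → E →SL[σ₁₂] F}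
    (hg : ¬∃ C, ∀ i, ‖g i‖ ≤ C) : IsMeagre {x | BddAbove (range fun i => ‖g i x‖)} := by
  set B := ContinuousLinearMap.pointwiseBoundedSubmodule (𝕜 := 𝕜) g
  have hB : {x | BddAbove (range fun i => ‖g i x‖)} = ⋃ m : ℕ, {x | ∀ i, ‖g i x‖ ≤ m} := by
    ext x
    simp only [mem_ofPred_eq, mem_iUnion, bddAbove_def, forall_mem_range]
    exact ⟨fun ⟨C, hC⟩ => (exists_nat_ge C).imp fun m hm i => (hC i).trans hm,
      fun ⟨m, hm⟩ => ⟨m, hm⟩⟩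
  rw [hB]
  refine isMeagre_iUnion fun m => IsNowhereDense.isMeagre ?_
  have hclosed : IsClosed {x | ∀ i, ‖g i x‖ ≤ m} := by
    simp only [ofPred_forall]
    exact isClosed_iInter fun i => isClosed_le (g i).continuous.norm continuous_const
  -- An interior point of this piece is one of the subspace `B`, which is then all of `E`.
  refine hclosed.isNowhereDense_iff.2 (not_nonempty_iff_eq_empty.1 fun hint => hg ?_)
  have hBtop : B = ⊤ := B.eq_top_of_nonempty_interior' <|
    hint.mono <| interior_mono fun x hx => ⟨m, forall_mem_range.2 hx⟩
  exact banach_steinhaus fun x => by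
    obtain ⟨C, hC⟩ : x ∈ B := hBtop ▸ Submodule.mem_top
    exact ⟨C, fun i => hC (mem_range_self i)⟩

end BanachSteinhaus

theorem liminf_eq_zero_of_tendsto_comp {u : ℕ → ℝ} (hu : ∀ n, 0 ≤ u n) {φ : ℕ → ℕ}
    (hφ : Tendsto φ atTop atTop) (hlim : Tendsto (u ∘ φ) atTop (𝓝 0)) : liminf u atTop = 0 := by
  have hcobdd : IsCoboundedUnder (· ≥ ·) (map φ atTop) u := by
    rw [IsCoboundedUnder, map_map]
    exact hlim.isCoboundedUnder_ge
  refine le_antisymm ?_ (le_liminf_of_le (hcobdd.mono (map_mono hφ)) (.of_forall hu))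
  calc liminf u atTop ≤ liminf (u ∘ φ) atTop :=
        hφ.liminf_le_liminf_comp hcobdd (isBoundedUnder_of_eventually_ge (.of_forall hu))
    _ = 0 := hlim.liminf_eq

theorem stmt2_general {X : Type*} [NormedAddCommGroup X] [NormedSpace ℂ X] [CompleteSpace X]
    (T : X →L[ℂ] X)
    (NS : Set X)
    (hNS : NS = {x : X | ∃ φ : ℕ → ℕ, StrictMono φ ∧
        Tendsto (fun k => (T ^ (φ k)) x) atTop (𝓝 0)})
    (hres : NS ∈ residual X)
    (hpb : ¬ ∃ C : ℝ, ∀ n : ℕ, ‖T ^ n‖ ≤ C) :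
    ∃ x : X, Filter.liminf (fun n : ℕ => ‖(T ^ n) x‖) atTop = 0 ∧
      ¬ BddAbove (Set.range fun n : ℕ => ‖(T ^ n) x‖) := by
  have hunbdd : {x | ¬BddAbove (range fun n : ℕ => ‖(T ^ n) x‖)} ∈ residual X :=
    isMeagre_setOf_bddAbove_norm_apply hpb
  obtain ⟨x, hxNS, hx⟩ := (dense_of_mem_residual (inter_mem hres hunbdd)).nonempty
  rw [hNS] at hxNS
  obtain ⟨φ, hφ, hlim⟩ := hxNS
  refine ⟨x, liminf_eq_zero_of_tendsto_comp (fun n => norm_nonneg _) hφ.tendsto_atTop ?_, hx⟩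
  simpa only [Function.comp_def, norm_zero] using hlim.norm

/-- If `X` is the closed linear span of `NS(T)`, `NS(T)` is residual, and `T` is not
power bounded, then `T` has an irregular vector. -/
theorem stmt2 {X : Type*} [NormedAddCommGroup X] [NormedSpace ℂ X] [CompleteSpace X]
    (T : X →L[ℂ] X)
    (NS : Set X)
    (hNS : NS = {x : X | ∃ φ : ℕ → ℕ, StrictMono φ ∧
        Tendsto (fun k => (T ^ (φ k)) x) atTop (𝓝 0)})
    (hspan : closure ((Submodule.span ℂ NS : Submodule ℂ X) : Set X) = Set.univ)
    (hres : NS ∈ residual X)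
    (hpb : ¬ ∃ C : ℝ, ∀ n : ℕ, ‖T ^ n‖ ≤ C) :
    ∃ x : X, Filter.liminf (fun n : ℕ => ‖(T ^ n) x‖) atTop = 0 ∧
      ¬ BddAbove (Set.range fun n : ℕ => ‖(T ^ n) x‖) :=
  stmt2_general T NS hNS hres hpb
end
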